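/- arXiv:0904.1557 — 2 statements merged into one kernel-verified Lean document; each statement's English description precedes it below -/
import Mathlib

section
/- Let g: ℝ → ℝ be continuous with limsup_{s→0⁺} g(s)/s = −m < 0 and lim_{s→±∞} g(s)/s⁵ = 0. Define g₁(s) = (g(s) + ms)⁺ for s ≥ 0 and g₁(s) = 0 for s < 0, and g₂(s) = g₁(s) − g(s). Then for every ε > 0 there exists C_ε > 0 such that g₁(s) ≤ C_ε s⁵ + ε g₂(s) for all s ≥ 0. -/
open MeasureTheory Filter Topology Metric
open scoped RealInnerProductSpace ENNReal NNReal

noncomputable section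

abbrev E3 := EuclideanSpace ℝ (Fin 3)

/-- Membership in the Sobolev space `H¹(ℝ³)`: the function and its gradient are in `L²`. -/
def MemH1 (u : E3 → ℝ) : Prop :=
  MemLp u 2 (volume : Measure E3) ∧ MemLp (fun x => gradient u x) 2 (volume : Measure E3)

/-- Membership in `D^{1,2}(ℝ³)`, characterized as `L⁶` functions with gradient in `L²`
(this coincides with the completion of `C_c^∞` under the gradient `L²` norm). -/
def MemD12 (φ : E3 → ℝ) : Prop :=
  MemLp φ 6 (volume : Measure E3) ∧ MemLp (fun x => gradient φ x) 2 (volume : Measure E3)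

/-- `φ` is a weak solution of `-Δφ = q u²` in `D^{1,2}(ℝ³)`:
`∫ ∇φ·∇v = q ∫ u² v` for every test function `v ∈ D^{1,2}(ℝ³)`. -/
def WeakSol (q : ℝ) (u φ : E3 → ℝ) : Prop :=
  MemD12 φ ∧ ∀ v : E3 → ℝ, MemD12 v →
    ∫ x : E3, ⟪gradient φ x, gradient v x⟫ = q * ∫ x : E3, u x ^ 2 * v x


/-- Truncated pieces of the nonlinearity. -/
def gOne (g : ℝ → ℝ) (m : ℝ) (s : ℝ) : ℝ := if 0 ≤ s then max (g s + m * s) 0 else 0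

def gTwo (g : ℝ → ℝ) (m : ℝ) (s : ℝ) : ℝ := gOne g m s - g s


/-!
Since `g₂ s ≥ m s`, it suffices near `0` to have `g s + m s ≤ ε m s`, which holds on some
`[0, δ]` because `limsup g s / s = -m < -m + ε m` (at `s = 0` by continuity). On `[δ, ∞)` the
continuous function `g s + m s` is `O(s⁵)` at infinity and bounded on compacts, hence
`≤ C s⁵`, and then `g₁ s = (g s + m s)⁺ ≤ C s⁵` as well.
-/

/-- An unbounded real function has the junk `limsup` `sInf ∅ = 0`. -/
lemma Real.isBoundedUnder_le_of_limsup_ne_zero {α : Type*} {f : Filter α} {u : α → ℝ}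
    (h : limsup u f ≠ 0) : f.IsBoundedUnder (· ≤ ·) u := by
  contrapose! h
  have hempty : {a : ℝ | ∀ᶠ x in f, u x ≤ a} = ∅ :=
    Set.eq_empty_of_forall_notMem fun a ha => h ⟨a, ha⟩
  rw [limsup_eq, hempty, Real.sInf_empty]

lemma exists_forall_Icc_le_mul_of_limsup_div_lt {g : ℝ → ℝ} (hg : Continuous g) {L : ℝ}
    (hbdd : (𝓝[>] (0 : ℝ)).IsBoundedUnder (· ≤ ·) (fun s => g s / s))
    (hL : limsup (fun s => g s / s) (𝓝[>] 0) < L) :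
    ∃ δ > 0, ∀ s ∈ Set.Icc 0 δ, g s ≤ L * s := by
  obtain ⟨δ, hδ, hδL⟩ := mem_nhdsGT_iff_exists_Ioo_subset.mp (eventually_lt_of_limsup_lt hL hbdd)
  refine ⟨δ, hδ, ?_⟩
  have hIoo : Set.Ioo 0 δ ⊆ {s | g s ≤ L * s} := fun s hs =>
    ((div_lt_iff₀ hs.1).mp (hδL hs)).le
  rw [← closure_Ioo hδ.ne]
  exact (isClosed_le hg (continuous_const_mul L)).closure_subset_iff.mpr hIoo

lemma exists_forall_Ici_le_mul_pow {f : ℝ → ℝ} (hf : Continuous f) {n : ℕ}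
    (hO : f =O[atTop] (· ^ n)) {a : ℝ} (ha : 0 < a) :
    ∃ C > 0, ∀ s, a ≤ s → f s ≤ C * s ^ n := by
  obtain ⟨c, hc⟩ := hO.bound
  obtain ⟨M, hM⟩ := eventually_atTop.mp hc
  obtain ⟨B, hB⟩ := isCompact_Icc.exists_bound_of_continuousOn (s := Set.Icc a M) hf.continuousOn
  set C := max (max c (B / a ^ n)) 1
  refine ⟨C, by positivity, fun s hs => ?_⟩
  have han : 0 < a ^ n := by positivity
  have hsn : a ^ n ≤ s ^ n := pow_le_pow_left₀ ha.le hs n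
  rcases le_total s M with hsM | hMs
  · calc f s ≤ B := (le_abs_self _).trans (hB s ⟨hs, hsM⟩)
      _ = B / a ^ n * a ^ n := by field_simp
      _ ≤ C * s ^ n := by
        gcongr
        exact le_max_of_le_left (le_max_right _ _)
  · have hs0 : 0 ≤ s ^ n := han.le.trans hsn
    calc f s ≤ c * ‖s ^ n‖ := (le_abs_self _).trans (hM s hMs)
      _ = c * s ^ n := by rw [Real.norm_of_nonneg hs0]
      _ ≤ C * s ^ n := by
        gcongr
        exact le_max_of_le_left (le_max_left _ _)

lemma gOne_of_nonneg {g : ℝ → ℝ} {m s : ℝ} (hs : 0 ≤ s) : gOne g m s = max (g s + m * s) 0 :=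
  if_pos hs

lemma mul_le_gTwo {g : ℝ → ℝ} {m s : ℝ} (hs : 0 ≤ s) : m * s ≤ gTwo g m s := by
  rw [gTwo, gOne_of_nonneg hs]
  linarith [le_max_left (g s + m * s) 0]

lemma isBigO_add_mul_pow {g : ℝ → ℝ} (m : ℝ) {n : ℕ} (hn : 1 < n)
    (htop : Tendsto (fun s => g s / s ^ n) atTop (𝓝 0)) :
    (fun s => g s + m * s) =O[atTop] (· ^ n) := by
  have hg : g =o[atTop] (· ^ n) := by
    refine (Asymptotics.isLittleO_iff_tendsto' ?_).mpr htop
    filter_upwards [eventually_gt_atTop 0] with s hs h using absurd h (by positivity)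
  have hlin : (fun s : ℝ => m * s) =O[atTop] (· ^ n) := by
    simpa using (Asymptotics.isLittleO_pow_pow_atTop_of_lt (𝕜 := ℝ) hn).isBigO.const_mul_left m
  exact hg.isBigO.add hlin

theorem g1_le_g2_general (g : ℝ → ℝ) (hg : Continuous g) (m : ℝ) (hm : 0 < m)
    (h0 : Filter.limsup (fun s => g s / s) (nhdsWithin (0 : ℝ) (Set.Ioi 0)) = -m)
    (htop : Tendsto (fun s => g s / s ^ 5) atTop (nhds (0 : ℝ))) :
    ∀ ε : ℝ, 0 < ε → ∃ C : ℝ, 0 < C ∧ ∀ s : ℝ, 0 ≤ s →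
      gOne g m s ≤ C * s ^ 5 + ε * gTwo g m s := by
  intro ε hε
  have hbdd := Real.isBoundedUnder_le_of_limsup_ne_zero (h0.trans_ne (neg_ne_zero.mpr hm.ne'))
  obtain ⟨δ, hδ, hsmall⟩ := exists_forall_Icc_le_mul_of_limsup_div_lt hg hbdd
    (L := -m + ε * m) (by rw [h0]; linarith [mul_pos hε hm])
  obtain ⟨C, hC, hlarge⟩ := exists_forall_Ici_le_mul_pow (by fun_prop)
    (isBigO_add_mul_pow m (by norm_num) htop) hδ
  refine ⟨C, hC, fun s hs => ?_⟩
  have hg₂ : ε * (m * s) ≤ ε * gTwo g m s := mul_le_mul_of_nonneg_left (mul_le_gTwo hs) hε.le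
  have hg₂_nonneg : 0 ≤ ε * gTwo g m s := (by positivity : 0 ≤ ε * (m * s)).trans hg₂
  have hs5 : 0 ≤ C * s ^ 5 := by positivity
  rw [gOne_of_nonneg hs]
  rcases le_total s δ with hsδ | hδs
  · have := hsmall s ⟨hs, hsδ⟩
    exact max_le (by linarith) (by linarith)
  · exact max_le (by linarith [hlarge s hδs]) (by linarith)

/-- For every `ε > 0` there is `C_ε > 0` with `g₁(s) ≤ C_ε s⁵ + ε g₂(s)` for all `s ≥ 0`. -/
theorem g1_le_g2 (g : ℝ → ℝ) (hg : Continuous g) (m : ℝ) (hm : 0 < m)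
    (h0 : Filter.limsup (fun s => g s / s) (nhdsWithin (0 : ℝ) (Set.Ioi 0)) = -m)
    (htop : Tendsto (fun s => g s / s ^ 5) atTop (nhds (0 : ℝ)))
    (hbot : Tendsto (fun s => g s / s ^ 5) atBot (nhds (0 : ℝ))) :
    ∀ ε : ℝ, 0 < ε → ∃ C : ℝ, 0 < C ∧ ∀ s : ℝ, 0 ≤ s →
      gOne g m s ≤ C * s ^ 5 + ε * gTwo g m s :=
  g1_le_g2_general g hg m hm h0 htop
end
end

section
/- Let g₂: ℝ → ℝ be continuous with g₂(s)s = m s² + h(s) where h ≥ 0 is continuous, and let (u_n) ⊂ H^1(ℝ³) with u_n → u a.e., ∫g₂(u_n)u_n → ∫g₂(u)u < ∞. Then, up to a subsequence, ∫_{ℝ³} u_n² → ∫_{ℝ³} u². -/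
open MeasureTheory Filter Topology Metric
open scoped RealInnerProductSpace ENNReal NNReal

noncomputable section

/-!
The whole sequence converges. By Fatou's lemma `∫ u² ≤ liminf ∫ u_n²` and
`∫ h(u) ≤ liminf ∫ h(u_n)`, while `m ∫ u_n² + ∫ h(u_n) = ∫ g₂(u_n) u_n` converges to
`m ∫ u² + ∫ h(u)`; so `limsup ∫ u_n²` cannot exceed `∫ u²`.
-/

theorem tendsto_of_tendsto_add_of_eventually_lt {ι : Type*} {l : Filter ι} {a b : ι → ℝ}
    {A B : ℝ} (hsum : Tendsto (fun i => a i + b i) l (𝓝 (A + B)))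
    (ha : ∀ c < A, ∀ᶠ i in l, c < a i) (hb : ∀ c < B, ∀ᶠ i in l, c < b i) :
    Tendsto a l (𝓝 A) := by
  refine tendsto_order.2 ⟨ha, fun c hc => ?_⟩
  have hδ : 0 < (c - A) / 2 := by linarith
  filter_upwards [hb _ (sub_lt_self B hδ),
    hsum.eventually (eventually_lt_nhds (lt_add_of_pos_right (A + B) hδ))] with i hbi hsumi
  linarith

section Fatou

variable {α : Type*} [MeasurableSpace α] {μ : Measure α}

theorem eventually_lt_integral_of_tendsto_ae {f : ℕ → α → ℝ} {F : α → ℝ}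
    (hf : ∀ n, Integrable (f n) μ) (hf_nonneg : ∀ n, 0 ≤ᵐ[μ] f n)
    (hlim : ∀ᵐ x ∂μ, Tendsto (fun n => f n x) atTop (𝓝 (F x))) {c : ℝ}
    (hc : c < ∫ x, F x ∂μ) : ∀ᶠ n in atTop, c < ∫ x, f n x ∂μ := by
  rcases lt_or_ge c 0 with hc0 | hc0
  · exact Eventually.of_forall fun n => hc0.trans_le (integral_nonneg_of_ae (hf_nonneg n))
  have hF_nonneg : 0 ≤ᵐ[μ] F := by
    filter_upwards [ae_all_iff.2 hf_nonneg, hlim] with x hfx hx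
    exact ge_of_tendsto' hx hfx
  have hF_meas : AEStronglyMeasurable F μ :=
    aestronglyMeasurable_of_tendsto_ae atTop (fun n => (hf n).1) hlim
  have fatou : ∫⁻ x, ENNReal.ofReal (F x) ∂μ
      ≤ liminf (fun n => ∫⁻ x, ENNReal.ofReal (f n x) ∂μ) atTop := by
    calc ∫⁻ x, ENNReal.ofReal (F x) ∂μ
        = ∫⁻ x, liminf (fun n => ENNReal.ofReal (f n x)) atTop ∂μ := by
          refine lintegral_congr_ae ?_
          filter_upwards [hlim] with x hx
          exact ((ENNReal.continuous_ofReal.tendsto _).comp hx).liminf_eq.symm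
      _ ≤ _ := lintegral_liminf_le' fun n => (hf n).1.aemeasurable.ennreal_ofReal
  have hc' : ENNReal.ofReal c < liminf (fun n => ∫⁻ x, ENNReal.ofReal (f n x) ∂μ) atTop := by
    refine lt_of_lt_of_le ?_ fatou
    rw [integral_eq_lintegral_of_nonneg_ae hF_nonneg hF_meas] at hc
    exact (ENNReal.ofReal_lt_ofReal_iff_of_nonneg hc0).2 hc |>.trans_le ENNReal.ofReal_toReal_le
  filter_upwards [eventually_lt_of_lt_liminf hc'] with n hn
  rwa [← ofReal_integral_eq_lintegral_ofReal (hf n) (hf_nonneg n),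
    ENNReal.ofReal_lt_ofReal_iff_of_nonneg hc0] at hn

theorem tendsto_integral_of_tendsto_integral_add {f g : ℕ → α → ℝ} {F G : α → ℝ}
    (hf : ∀ n, Integrable (f n) μ) (hg : ∀ n, Integrable (g n) μ)
    (hf_nonneg : ∀ n, 0 ≤ᵐ[μ] f n) (hg_nonneg : ∀ n, 0 ≤ᵐ[μ] g n)
    (hf_lim : ∀ᵐ x ∂μ, Tendsto (fun n => f n x) atTop (𝓝 (F x)))
    (hg_lim : ∀ᵐ x ∂μ, Tendsto (fun n => g n x) atTop (𝓝 (G x)))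
    (hsum : Tendsto (fun n => ∫ x, f n x ∂μ + ∫ x, g n x ∂μ) atTop
      (𝓝 (∫ x, F x ∂μ + ∫ x, G x ∂μ))) :
    Tendsto (fun n => ∫ x, f n x ∂μ) atTop (𝓝 (∫ x, F x ∂μ)) :=
  tendsto_of_tendsto_add_of_eventually_lt hsum
    (fun _ hc => eventually_lt_integral_of_tendsto_ae hf hf_nonneg hf_lim hc)
    (fun _ hc => eventually_lt_integral_of_tendsto_ae hg hg_nonneg hg_lim hc)

end Fatou

theorem L2_convergence_general (g₂ h : ℝ → ℝ) (hh : Continuous h)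
    (hhpos : ∀ s : ℝ, 0 ≤ h s) (m : ℝ) (hm : 0 < m)
    (hsplit : ∀ s : ℝ, g₂ s * s = m * s ^ 2 + h s)
    (u : ℕ → E3 → ℝ) (v : E3 → ℝ)
    (hmem : ∀ n, MemLp (u n) 2 (volume : Measure E3))
    (hvmem : MemLp v 2 (volume : Measure E3))
    (hae : ∀ᵐ x : E3 ∂(volume : Measure E3), Tendsto (fun n => u n x) atTop (nhds (v x)))
    (hint : ∀ n, Integrable (fun x : E3 => g₂ (u n x) * u n x))
    (hvint : Integrable (fun x : E3 => g₂ (v x) * v x))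
    (hconv : Tendsto (fun n => ∫ x : E3, g₂ (u n x) * u n x) atTop
      (nhds (∫ x : E3, g₂ (v x) * v x))) :
    ∃ ns : ℕ → ℕ, StrictMono ns ∧
      Tendsto (fun k => ∫ x : E3, u (ns k) x ^ 2) atTop (nhds (∫ x : E3, v x ^ 2)) := by
  have integrable_h {w : E3 → ℝ} (hw : MemLp w 2 volume)
      (hgw : Integrable (fun x => g₂ (w x) * w x)) : Integrable (fun x => h (w x)) := by
    refine (hgw.sub (hw.integrable_sq.const_mul m)).congr (ae_of_all _ fun x => ?_)
    simp only [Pi.sub_apply, hsplit, add_sub_cancel_left]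
  have integral_split {w : E3 → ℝ} (hw : MemLp w 2 volume)
      (hgw : Integrable (fun x => g₂ (w x) * w x)) :
      ∫ x, g₂ (w x) * w x = (∫ x, m * w x ^ 2) + ∫ x, h (w x) := by
    simp only [hsplit]
    exact integral_add (hw.integrable_sq.const_mul m) (integrable_h hw hgw)
  have hlim : Tendsto (fun n => ∫ x, m * u n x ^ 2) atTop (𝓝 (∫ x, m * v x ^ 2)) := by
    refine tendsto_integral_of_tendsto_integral_add (g := fun n x => h (u n x))
      (fun n => (hmem n).integrable_sq.const_mul m) (fun n => integrable_h (hmem n) (hint n))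
      (fun n => ae_of_all _ fun x => by positivity) (fun n => ae_of_all _ fun x => hhpos _)
      (hae.mono fun x hx => (hx.pow 2).const_mul m)
      (hae.mono fun x hx => (hh.tendsto _).comp hx) ?_
    simpa only [← integral_split (hmem _) (hint _), ← integral_split hvmem hvint] using hconv
  refine ⟨id, strictMono_id, ?_⟩
  simpa [integral_const_mul, hm.ne'] using hlim.const_mul m⁻¹

/-- If `g₂(s)s = m s² + h(s)` with `h ≥ 0`, `u_n → u` a.e. and
`∫ g₂(u_n)u_n → ∫ g₂(u)u`, then, up to a subsequence, `∫ u_n² → ∫ u²`. -/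
theorem L2_convergence (g₂ h : ℝ → ℝ) (hg₂ : Continuous g₂) (hh : Continuous h)
    (hhpos : ∀ s : ℝ, 0 ≤ h s) (m : ℝ) (hm : 0 < m)
    (hsplit : ∀ s : ℝ, g₂ s * s = m * s ^ 2 + h s)
    (u : ℕ → E3 → ℝ) (v : E3 → ℝ)
    (hmem : ∀ n, MemLp (u n) 2 (volume : Measure E3))
    (hvmem : MemLp v 2 (volume : Measure E3))
    (hae : ∀ᵐ x : E3 ∂(volume : Measure E3), Tendsto (fun n => u n x) atTop (nhds (v x)))
    (hint : ∀ n, Integrable (fun x : E3 => g₂ (u n x) * u n x))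
    (hvint : Integrable (fun x : E3 => g₂ (v x) * v x))
    (hconv : Tendsto (fun n => ∫ x : E3, g₂ (u n x) * u n x) atTop
      (nhds (∫ x : E3, g₂ (v x) * v x))) :
    ∃ ns : ℕ → ℕ, StrictMono ns ∧
      Tendsto (fun k => ∫ x : E3, u (ns k) x ^ 2) atTop (nhds (∫ x : E3, v x ^ 2)) :=
  L2_convergence_general g₂ h hh hhpos m hm hsplit u v hmem hvmem hae hint hvint hconv
end
end
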